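/- Exact momentum conservation of the discrete-gradient-dependent integrator: suppose V^n, V^{n+1} ∈ (ℝ³)^N satisfy the DGDI update. Then the total momentum is conserved: Σ_{p=1}^N m w_p v_p^{n+1} = Σ_{p=1}^N m w_p v_p^n. -/

import Mathlib

open Matrix
open scoped RealInnerProductSpace

/-- The Landau collision kernel `Q(ξ) = (1/‖ξ‖)(I − ξξᵀ/‖ξ‖²)` on ℝ³. -/
noncomputable def landauQ (ξ : EuclideanSpace ℝ (Fin 3)) : Matrix (Fin 3) (Fin 3) ℝ :=
  ‖ξ‖⁻¹ • ((1 : Matrix (Fin 3) (Fin 3) ℝ) - (‖ξ‖ ^ 2)⁻¹ • Matrix.vecMulVec ξ ξ)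

/-- Reinterpret a plain vector in `ℝ³` as a point of Euclidean space. -/
noncomputable def toE3 (v : Fin 3 → ℝ) : EuclideanSpace ℝ (Fin 3) :=
  (WithLp.equiv 2 (Fin 3 → ℝ)).symm v

/-- Partial gradient of `F : (ℝ³)^N → ℝ` with respect to the velocity `v_p`. -/
noncomputable def gradVp {N : ℕ} (F : (Fin N → EuclideanSpace ℝ (Fin 3)) → ℝ)
    (V : Fin N → EuclideanSpace ℝ (Fin 3)) (p : Fin N) : EuclideanSpace ℝ (Fin 3) :=
  gradient (fun ξ => F (Function.update V p ξ)) (V p)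

/-- The `p`-th `ℝ³` block of the average discrete gradient
`∇̄F(Vⁿ,Vⁿ⁺¹) = ∫₀¹ ∇F((1−t)Vⁿ + t Vⁿ⁺¹) dt`. -/
noncomputable def bGrad {N : ℕ} (F : (Fin N → EuclideanSpace ℝ (Fin 3)) → ℝ)
    (V0 V1 : Fin N → EuclideanSpace ℝ (Fin 3)) (p : Fin N) : EuclideanSpace ℝ (Fin 3) :=
  ∫ t in (0:ℝ)..1, gradVp F ((1 - t) • V0 + t • V1) p

/-- `Γ̄(F,p,p̄) = (1/(m w_p)) (∇̄F)_p − (1/(m w_p̄)) (∇̄F)_p̄`. -/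
noncomputable def bGamma {N : ℕ} (m : ℝ) (w : Fin N → ℝ)
    (F : (Fin N → EuclideanSpace ℝ (Fin 3)) → ℝ)
    (V0 V1 : Fin N → EuclideanSpace ℝ (Fin 3)) (p q : Fin N) : EuclideanSpace ℝ (Fin 3) :=
  (1 / (m * w p)) • bGrad F V0 V1 p - (1 / (m * w q)) • bGrad F V0 V1 q

/-- The kinetic energy `K(V) = ½ Σ_p m w_p ‖v_p‖²`. -/
noncomputable def kinE {N : ℕ} (m : ℝ) (w : Fin N → ℝ)
    (V : Fin N → EuclideanSpace ℝ (Fin 3)) : ℝ :=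
  (1 / 2) * ∑ p, m * w p * ‖V p‖ ^ 2

/-- The discrete-gradient-dependent integrator (DGDI) update:
`v_pⁿ⁺¹ = v_pⁿ + Δt (ν/m) Σ_p̄ w_p̄ 𝟙(p,p̄) Q(Γ̄(K,p,p̄)) Γ̄(S,p,p̄)` for every `p`. -/
def DGDIUpdate {N : ℕ} (m ν Δt : ℝ) (w : Fin N → ℝ) (ind : Fin N → Fin N → ℝ)
    (S : (Fin N → EuclideanSpace ℝ (Fin 3)) → ℝ)
    (V0 V1 : Fin N → EuclideanSpace ℝ (Fin 3)) : Prop :=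
  ∀ p, V1 p = V0 p + (Δt * (ν / m)) •
    ∑ q, (w q * ind p q) •
      toE3 ((landauQ (bGamma m w (kinE m w) V0 V1 p q)).mulVec (bGamma m w S V0 V1 p q))


lemma landauQ_neg (ξ : EuclideanSpace ℝ (Fin 3)) : landauQ (-ξ) = landauQ ξ := by
  unfold landauQ
  have h : Matrix.vecMulVec (-ξ : EuclideanSpace ℝ (Fin 3)) (-ξ) = Matrix.vecMulVec ξ ξ := by
    ext i j
    simp [Matrix.vecMulVec_apply]
  rw [norm_neg, h]

lemma bGamma_swap {N : ℕ} (m : ℝ) (w : Fin N → ℝ)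
    (F : (Fin N → EuclideanSpace ℝ (Fin 3)) → ℝ)
    (V0 V1 : Fin N → EuclideanSpace ℝ (Fin 3)) (p q : Fin N) :
    bGamma m w F V0 V1 q p = - bGamma m w F V0 V1 p q := by
  unfold bGamma; abel

lemma toE3_neg (v : Fin 3 → ℝ) : toE3 (-v) = - toE3 v := rfl

/-- Exact momentum conservation of the discrete-gradient-dependent integrator:
under the DGDI update, `Σ_p m w_p v_pⁿ⁺¹ = Σ_p m w_p v_pⁿ`. -/
theorem DGDI_momentum_conservation
(N : ℕ) (hN : 1 ≤ N) (m : ℝ) (hm : 0 < m)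
    (w : Fin N → ℝ) (hw : ∀ p, 0 < w p) (ν : ℝ) (hν : 0 ≤ ν) (Δt : ℝ) (hΔt : 0 ≤ Δt)
    (ind : Fin N → Fin N → ℝ) (hind01 : ∀ p q, ind p q = 0 ∨ ind p q = 1)
    (hindsymm : ∀ p q, ind p q = ind q p) (hinddiag : ∀ p, ind p p = 0)
    (S : (Fin N → EuclideanSpace ℝ (Fin 3)) → ℝ) (hS : ContDiff ℝ 1 S)
    (V0 V1 : Fin N → EuclideanSpace ℝ (Fin 3))
    (hK : ∀ p q, ind p q = 1 → bGamma m w (kinE m w) V0 V1 p q ≠ 0)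
    (hupd : DGDIUpdate m ν Δt w ind S V0 V1) :
    ∑ p, (m * w p) • V1 p = ∑ p, (m * w p) • V0 p := by
  set g : Fin N → Fin N → EuclideanSpace ℝ (Fin 3) := fun p q =>
    ((m * w p) * (Δt * (ν / m)) * (w q * ind p q)) •
      toE3 ((landauQ (bGamma m w (kinE m w) V0 V1 p q)).mulVec (bGamma m w S V0 V1 p q))
    with hg
  have hanti : ∀ p q, g q p = - g p q := by
    intro p q
    simp only [hg]
    rw [bGamma_swap m w (kinE m w) V0 V1 p q, bGamma_swap m w S V0 V1 p q, landauQ_neg,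
      WithLp.ofLp_neg, Matrix.mulVec_neg, toE3_neg, smul_neg, ← neg_smul]
    congr 1
    rw [hindsymm q p, ← neg_smul]; congr 1; ring
  have hsum0 : ∑ p, ∑ q, g p q = 0 := by
    have h2 : (∑ p, ∑ q, g p q) + (∑ p, ∑ q, g p q) = 0 := by
      nth_rewrite 1 [Finset.sum_comm (s := Finset.univ) (t := Finset.univ) (f := g)]
      rw [← Finset.sum_add_distrib]
      refine Finset.sum_eq_zero fun p _ => ?_
      rw [← Finset.sum_add_distrib]
      refine Finset.sum_eq_zero fun q _ => ?_
      rw [hanti p q]; abel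
    have h3 : (2:ℝ) • (∑ p, ∑ q, g p q) = 0 := by rw [two_smul]; exact h2
    have := smul_eq_zero.mp h3
    simpa using this
  calc ∑ p, (m * w p) • V1 p
      = ∑ p, ((m * w p) • V0 p + ∑ q, g p q) := by
        refine Finset.sum_congr rfl fun p _ => ?_
        rw [hupd p, smul_add, smul_smul, Finset.smul_sum]
        congr 1
        refine Finset.sum_congr rfl fun q _ => ?_
        rw [smul_smul]
    _ = ∑ p, (m * w p) • V0 p + ∑ p, ∑ q, g p q := Finset.sum_add_distrib
    _ = ∑ p, (m * w p) • V0 p := by rw [hsum0, add_zero]
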